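/- Let d ≥ 1 and let ψ ∈ ℂ^d ⊗ ℂ^d be a unit vector with a Schmidt decomposition with Schmidt coefficients λ : Fin d → ℝ. Then for every Kraus set {E_1, …, E_m} on ℂ^d, ∑_{i=1}^{m} |⟨ψ, (E_i ⊗ 1) Φ_ME⟩|² ≤ (1/d) · (∑_{a} √(λ_a))². (This is the single-string bound p̃_0 ≤ (1/d)(∑_a λ_a^{1/2})² established in the proof of Theorem 1.) -/

import Mathlib

/-!
In Schmidt form, `⟨ψ, (E ⊗ 1) Φ_ME⟩ = d^{-1/2} ∑_a √λ_a ⟨ν_a, E μ̄_a⟩`: the maximally entangled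
state transposes `E` onto the conjugate of the second Schmidt vector. Cauchy–Schwarz and the
completeness relation `∑ E_iᴴ E_i = 1` give `∑_i |⟨ν_a, E_i μ̄_a⟩|² ≤ ∑_i ‖E_i μ̄_a‖² = 1` for
each `a`, and the weighted Cauchy–Schwarz inequality
`|∑_a w_a c_a|² ≤ (∑_a w_a) (∑_a w_a |c_a|²)` with `w_a = √λ_a`, summed over `i`, turns this into
the bound `(∑_a √λ_a)²`.
-/

open Matrix BigOperators
open scoped ComplexConjugate Kronecker

noncomputable section

/-- The standard inner product on `ℂ^I` (functions `I → ℂ`), conjugate-linear in the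
first argument. -/
def cinner {I : Type*} [Fintype I] (v w : I → ℂ) : ℂ := ∑ a, conj (v a) * w a

/-- The action of the Kronecker product `A ⊗ B` on `ℂ^d ⊗ ℂ^d`, identified with
the space of functions `Fin d × Fin d → ℂ`. -/
def tensorOp {d : ℕ} (A B : Matrix (Fin d) (Fin d) ℂ) (ψ : Fin d × Fin d → ℂ) :
    Fin d × Fin d → ℂ :=
  fun p => ∑ q : Fin d × Fin d, A p.1 q.1 * B p.2 q.2 * ψ q

/-- The maximally entangled state `Φ_ME`, with `Φ_ME (a, b) = 1/√d` if `a = b` and `0`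
otherwise. -/
def PhiME (d : ℕ) : Fin d × Fin d → ℂ :=
  fun p => if p.1 = p.2 then ((1 / Real.sqrt d : ℝ) : ℂ) else 0

section cinner

variable {I : Type*} [Fintype I]

lemma cinner_eq_inner (v w : I → ℂ) :
    cinner v w = inner ℂ (WithLp.toLp 2 v : EuclideanSpace ℂ I) (WithLp.toLp 2 w) := by
  simp [cinner, PiLp.inner_apply, mul_comm]

lemma cinner_eq_star_dotProduct (v w : I → ℂ) : cinner v w = star v ⬝ᵥ w := rfl

lemma norm_cinner_sq_le (v w : I → ℂ) :
    ‖cinner v w‖ ^ 2 ≤ (cinner v v).re * (cinner w w).re := by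
  simp only [cinner_eq_inner, ← RCLike.re_to_complex, ← norm_sq_eq_re_inner, ← mul_pow]
  exact pow_le_pow_left₀ (norm_nonneg _) (norm_inner_le_norm _ _) 2

lemma cinner_star_star (v w : I → ℂ) : cinner (star v) (star w) = conj (cinner v w) := by
  simp [cinner, mul_comm]

lemma sum_cinner_mulVec_self_of_kraus {ι : Type*} [Fintype ι] [DecidableEq I]
    {E : ι → Matrix I I ℂ} (hE : ∑ i, (E i)ᴴ * E i = 1) (x : I → ℂ) :
    ∑ i, cinner (E i *ᵥ x) (E i *ᵥ x) = cinner x x := by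
  simp only [cinner_eq_star_dotProduct, star_mulVec, ← dotProduct_mulVec, mulVec_mulVec,
    ← dotProduct_sum, ← sum_mulVec, hE, one_mulVec]

lemma sum_norm_cinner_mulVec_sq_le_of_kraus {ι : Type*} [Fintype ι] [DecidableEq I]
    {E : ι → Matrix I I ℂ} (hE : ∑ i, (E i)ᴴ * E i = 1) {v : I → ℂ} (hv : cinner v v = 1)
    (x : I → ℂ) : ∑ i, ‖cinner v (E i *ᵥ x)‖ ^ 2 ≤ (cinner x x).re :=
  calc ∑ i, ‖cinner v (E i *ᵥ x)‖ ^ 2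
      ≤ ∑ i, (cinner v v).re * (cinner (E i *ᵥ x) (E i *ᵥ x)).re :=
        Finset.sum_le_sum fun i _ => norm_cinner_sq_le _ _
    _ = (cinner x x).re := by
        rw [hv, Complex.one_re, ← Finset.mul_sum, one_mul, ← Complex.re_sum,
          sum_cinner_mulVec_self_of_kraus hE]

end cinner

lemma tensorOp_one_PhiME_apply {d : ℕ} (A : Matrix (Fin d) (Fin d) ℂ) (p : Fin d × Fin d) :
    tensorOp A 1 (PhiME d) p = ((1 / Real.sqrt d : ℝ) : ℂ) * A p.1 p.2 := by
  simp [tensorOp, PhiME, one_apply, Fintype.sum_prod_type, mul_comm]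

lemma cinner_tensorOp_one_PhiME {d : ℕ} (s : Fin d → ℝ) (ν μ : Fin d → Fin d → ℂ)
    (A : Matrix (Fin d) (Fin d) ℂ) :
    cinner (fun p => ∑ a, (s a : ℂ) * ν a p.1 * μ a p.2) (tensorOp A 1 (PhiME d)) =
      ((1 / Real.sqrt d : ℝ) : ℂ) * ∑ a, (s a : ℂ) * cinner (ν a) (A *ᵥ star (μ a)) := by
  simp only [cinner, tensorOp_one_PhiME_apply, mulVec, dotProduct, Pi.star_apply,
    RCLike.star_def, map_sum, map_mul, Complex.conj_ofReal, Finset.mul_sum, Finset.sum_mul,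
    Fintype.sum_prod_type]
  conv_lhs => enter [2, x]; rw [Finset.sum_comm]
  rw [Finset.sum_comm]
  refine Finset.sum_congr rfl fun a _ => Finset.sum_congr rfl fun x _ =>
    Finset.sum_congr rfl fun y _ => ?_
  ring

lemma sum_norm_sq_sum_smul_le {ι α E : Type*} [Fintype ι] [Fintype α] [SeminormedAddCommGroup E]
    [NormedSpace ℝ E] {w : α → ℝ} (hw : ∀ a, 0 ≤ w a) {c : ι → α → E}
    (hc : ∀ a, ∑ i, ‖c i a‖ ^ 2 ≤ 1) :
    ∑ i, ‖∑ a, w a • c i a‖ ^ 2 ≤ (∑ a, w a) ^ 2 := by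
  have hCS : ∀ i, ‖∑ a, w a • c i a‖ ^ 2 ≤ (∑ a, w a) * ∑ a, w a * ‖c i a‖ ^ 2 := fun i =>
    calc ‖∑ a, w a • c i a‖ ^ 2 ≤ (∑ a, w a * ‖c i a‖) ^ 2 := by
          gcongr
          refine (norm_sum_le _ _).trans_eq (Finset.sum_congr rfl fun a _ => ?_)
          rw [norm_smul, Real.norm_of_nonneg (hw a)]
      _ ≤ _ := Finset.sum_sq_le_sum_mul_sum_of_sq_le_mul _ (fun a _ => hw a)
          (fun a _ => by have := hw a; positivity) (fun a _ => le_of_eq (by ring))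
  calc ∑ i, ‖∑ a, w a • c i a‖ ^ 2
      ≤ ∑ i, (∑ a, w a) * ∑ a, w a * ‖c i a‖ ^ 2 := Finset.sum_le_sum fun i _ => hCS i
    _ = (∑ a, w a) * ∑ a, w a * ∑ i, ‖c i a‖ ^ 2 := by
      rw [← Finset.mul_sum, Finset.sum_comm]
      simp only [Finset.mul_sum]
    _ ≤ (∑ a, w a) * ∑ a, w a * 1 := by
      gcongr with a
      · exact Finset.sum_nonneg fun a _ => hw a
      · exact hw a
      · exact hc a
    _ = (∑ a, w a) ^ 2 := by simp [sq]

theorem single_string_bound_general (d : ℕ)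
    (lam : Fin d → ℝ)
    (ψ : Fin d × Fin d → ℂ)
    (ν μ : Fin d → Fin d → ℂ)
    (hν : ∀ a b, cinner (ν a) (ν b) = if a = b then 1 else 0)
    (hμ : ∀ a b, cinner (μ a) (μ b) = if a = b then 1 else 0)
    (hψ : ψ = fun p => ∑ a, ((Real.sqrt (lam a) : ℝ) : ℂ) * ν a p.1 * μ a p.2)
    (m : ℕ) (E : Fin m → Matrix (Fin d) (Fin d) ℂ)
    (hE : ∑ i, (E i)ᴴ * E i = 1) :
    ∑ i, ‖cinner ψ (tensorOp (E i) 1 (PhiME d))‖ ^ 2 ≤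
      (1 / d : ℝ) * (∑ a, Real.sqrt (lam a)) ^ 2 := by
  subst hψ
  have hc : ∀ a, ∑ i, ‖cinner (ν a) (E i *ᵥ star (μ a))‖ ^ 2 ≤ 1 := fun a => by
    simpa [cinner_star_star, hμ] using
      sum_norm_cinner_mulVec_sq_le_of_kraus hE (by simpa using hν a a) (star (μ a))
  have hscale : ‖((1 / Real.sqrt d : ℝ) : ℂ)‖ ^ 2 = 1 / d := by
    rw [Complex.norm_real, Real.norm_eq_abs, sq_abs, div_pow, one_pow,
      Real.sq_sqrt d.cast_nonneg]
  calc _ = 1 / d * ∑ i, ‖∑ a, Real.sqrt (lam a) • cinner (ν a) (E i *ᵥ star (μ a))‖ ^ 2 := by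
        rw [Finset.mul_sum]
        refine Finset.sum_congr rfl fun i _ => ?_
        rw [cinner_tensorOp_one_PhiME, norm_mul, mul_pow, hscale]
        simp only [Complex.real_smul]
    _ ≤ 1 / d * (∑ a, Real.sqrt (lam a)) ^ 2 := by
        gcongr
        exact sum_norm_sq_sum_smul_le (fun a => Real.sqrt_nonneg _) hc

/-- The single-string bound `p̃_0 ≤ (1/d)(∑_a λ_a^{1/2})²` established in the proof of
Theorem 1. -/
theorem single_string_bound (d : ℕ) (hd : 1 ≤ d)
    (lam : Fin d → ℝ) (hlam : ∀ a, 0 ≤ lam a) (hlamsum : ∑ a, lam a = 1)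
    (ψ : Fin d × Fin d → ℂ)
    (ν μ : Fin d → Fin d → ℂ)
    (hν : ∀ a b, cinner (ν a) (ν b) = if a = b then 1 else 0)
    (hμ : ∀ a b, cinner (μ a) (μ b) = if a = b then 1 else 0)
    (hψ : ψ = fun p => ∑ a, ((Real.sqrt (lam a) : ℝ) : ℂ) * ν a p.1 * μ a p.2)
    (m : ℕ) (E : Fin m → Matrix (Fin d) (Fin d) ℂ)
    (hE : ∑ i, (E i)ᴴ * E i = 1) :
    ∑ i, ‖cinner ψ (tensorOp (E i) 1 (PhiME d))‖ ^ 2 ≤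
      (1 / d : ℝ) * (∑ a, Real.sqrt (lam a)) ^ 2 :=
  single_string_bound_general d lam ψ ν μ hν hμ hψ m E hE
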